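/- arXiv:2511.14672 — 3 statements merged into one kernel-verified Lean document; each statement's English description precedes it below -/
import Mathlib

section
/- Let ℓ1, ℓ2 ≥ 2 be integers and set m = (ℓ1-1)(ℓ2-1) and N = ℓ1·ℓ2. Let H(z) be the unique formal power series over ℚ with constant term 1 satisfying H(z) = (1 - z·H(z)^{N - ℓ1 - ℓ2})^{-1}. Then for every k ≥ 0 the coefficient of z^k in H(z)^N equals (N/(m·k + N)) * C(m·k + N, k). -/
open PowerSeries

noncomputable def raney (m N k : ℕ) : ℚ :=
  (N : ℚ) / ((m * k + N : ℕ) : ℚ) * Nat.choose (m * k + N) k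

lemma raney_key (m N k M : ℕ) (hm : 1 ≤ m) (hM : M = m * k + m + N) :
    ((N : ℚ) + 1) / ((M : ℚ) + 1) * ((M + 1).choose (k + 1)) =
      (N : ℚ) / M * (M.choose (k + 1)) + ((N : ℚ) + m) / M * (M.choose k) := by
  have hM1 : 1 ≤ M := by subst hM; nlinarith
  have hkM : k + 1 ≤ M := by subst hM; nlinarith
  have hM0 : (M : ℚ) ≠ 0 := by
    have : (0:ℚ) < M := by exact_mod_cast hM1
    exact this.ne'
  have hM1' : (M : ℚ) + 1 ≠ 0 := by positivity
  have relQ : (M.choose (k + 1) : ℚ) * (k + 1) = (M.choose k : ℚ) * ((M : ℚ) - k) := by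
    have h := Nat.choose_succ_right_eq M k
    have hle : k ≤ M := by omega
    have hsub : ((M - k : ℕ) : ℚ) = (M : ℚ) - k := by push_cast [hle]; ring
    calc (M.choose (k + 1) : ℚ) * (k + 1) = ((M.choose (k+1) * (k+1) : ℕ) : ℚ) := by push_cast; ring
    _ = ((M.choose k * (M - k) : ℕ) : ℚ) := by rw [h]
    _ = (M.choose k : ℚ) * ((M : ℚ) - k) := by push_cast [hsub.symm]; ring
  have pascal : (((M+1).choose (k+1) : ℕ) : ℚ) = (M.choose k : ℚ) + (M.choose (k+1) : ℚ) := by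
    rw [Nat.choose_succ_succ]; push_cast; ring
  have hMQ : (M : ℚ) = m * k + m + N := by exact_mod_cast congrArg (Nat.cast : ℕ → ℚ) hM
  rw [pascal]
  field_simp
  linear_combination (m:ℚ) * relQ + ((M.choose k:ℚ)+(M.choose (k+1):ℚ)) * hMQ

lemma raney_rec (m N k : ℕ) (hm : 1 ≤ m) :
    raney m (N + 1) (k + 1) = raney m N (k + 1) + raney m (N + m) k := by
  have e1 : m * (k + 1) + (N + 1) = (m * k + m + N) + 1 := by ring
  have e2 : m * (k + 1) + N = m * k + m + N := by ring
  have e3 : m * k + (N + m) = m * k + m + N := by ring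
  have key := raney_key m N k (m * k + m + N) hm rfl
  simp only [raney, e1, e2, e3]
  push_cast
  push_cast at key
  convert key using 2

lemma raney_main (m : ℕ) (hm : 1 ≤ m) (H : PowerSeries ℚ)
    (hH : H = 1 + X * H ^ m) :
    ∀ k N : ℕ, 0 < N + k → coeff k (H ^ N) = raney m N k := by
  have hc : constantCoeff H = 1 := by
    rw [hH]; simp
  intro k
  induction k with
  | zero =>
    intro N hN
    have hN' : (N : ℚ) ≠ 0 := by exact_mod_cast Nat.pos_of_ne_zero (by omega) |>.ne'
    simp [raney, coeff_zero_eq_constantCoeff, map_pow, hc, div_self hN']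
  | succ k ih =>
    intro N
    induction N with
    | zero =>
      intro _
      simp [raney]
    | succ N ihN =>
      intro _
      have expand : H ^ (N + 1) = H ^ N + X * H ^ (N + m) := by
        linear_combination H ^ N * hH
      rw [expand, map_add, coeff_succ_X_mul]
      rw [ihN (by omega), ih (N + m) (by omega)]
      exact (raney_rec m N k hm).symm

/-- Let `ℓ1, ℓ2 ≥ 2`, `m = (ℓ1-1)(ℓ2-1)`, `N = ℓ1·ℓ2`, and let `H ∈ ℚ[[z]]` be the (unique)
power series with constant term `1` satisfying `H = (1 - z·H^{ℓ1ℓ2 - ℓ1 - ℓ2})⁻¹`.  Then the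
coefficient of `z^k` in `H^N` equals `(N/(m·k + N)) * C(m·k + N, k)`. -/
theorem stmt_7 (ℓ1 ℓ2 : ℕ) (h1 : 2 ≤ ℓ1) (h2 : 2 ≤ ℓ2) (H : PowerSeries ℚ)
    (hc : PowerSeries.constantCoeff H = 1)
    (hfe : H * (1 - PowerSeries.X * H ^ (ℓ1 * ℓ2 - ℓ1 - ℓ2)) = 1) (k : ℕ) :
    PowerSeries.coeff k (H ^ (ℓ1 * ℓ2))
      = ((ℓ1 * ℓ2 : ℚ) / (((ℓ1 - 1) * (ℓ2 - 1) * k + ℓ1 * ℓ2 : ℕ) : ℚ)) *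
          Nat.choose ((ℓ1 - 1) * (ℓ2 - 1) * k + ℓ1 * ℓ2) k := by
  obtain ⟨a, rfl⟩ : ∃ a, ℓ1 = a + 2 := ⟨ℓ1 - 2, by omega⟩
  obtain ⟨b, rfl⟩ : ∃ b, ℓ2 = b + 2 := ⟨ℓ2 - 2, by omega⟩
  set m : ℕ := (a + 2 - 1) * (b + 2 - 1) with hm_def
  have hmval : m = a * b + a + b + 1 := by simp [hm_def]; ring
  have hsub : (a + 2) * (b + 2) - (a + 2) - (b + 2) = a * b + a + b := by
    have h : (a + 2) * (b + 2) = a * b + 2 * a + 2 * b + 4 := by ring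
    set c := a * b
    omega
  have hH : H = 1 + X * H ^ m := by
    rw [hmval]
    rw [hsub] at hfe
    linear_combination hfe
  have := raney_main m (by omega) H hH k ((a + 2) * (b + 2)) (by positivity)
  rw [this, raney]
  push_cast
  ring
end

section
/- For all positive integers b, c, i, g, one has g/((b-1)(c-1)i + g) * C((b-1)(c-1)i + g, i) = Σ_{ℓ=0}^{i-1} (g/(ℓ+1)) * C(i-1, ℓ) * C(i(bc - b - c) + g - 1, ℓ), where the sum may be taken over all ℓ ≥ 0 since C(i-1, ℓ) = 0 for ℓ ≥ i. -/
/-- The generalized binomial coefficient `C(x, ℓ) = x(x-1)⋯(x-ℓ+1)/ℓ!` for `x : ℚ`. -/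
noncomputable def genChoose (x : ℚ) (ℓ : ℕ) : ℚ :=
  (∏ m ∈ Finset.range ℓ, (x - m)) / (Nat.factorial ℓ)

lemma prod_eq_desc (x : ℚ) (ℓ : ℕ) :
    ∏ m ∈ Finset.range ℓ, (x - m) = (descPochhammer ℚ ℓ).eval x := by
  induction ℓ with
  | zero => simp
  | succ n ih => rw [Finset.prod_range_succ, ih, descPochhammer_succ_right]; simp

lemma genChoose_eq (x : ℚ) (ℓ : ℕ) :
    genChoose x ℓ = (descPochhammer ℚ ℓ).eval x * ((Nat.factorial ℓ : ℚ))⁻¹ := by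
  rw [genChoose, prod_eq_desc, div_eq_mul_inv]

lemma genChoose_nat (n ℓ : ℕ) : genChoose (n : ℚ) ℓ = (n.choose ℓ : ℚ) := by
  rw [genChoose, prod_eq_desc, descPochhammer_eval_eq_descFactorial,
    Nat.descFactorial_eq_factorial_mul_choose]
  push_cast
  rw [mul_comm, mul_div_assoc, div_self (by exact_mod_cast (Nat.factorial_ne_zero ℓ)), mul_one]

lemma nat_vand (n k : ℕ) :
    ∑ ℓ ∈ Finset.range (k + 1), (k + 1).choose (ℓ + 1) * n.choose ℓ = (n + (k + 1)).choose k := by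
  rw [Nat.add_choose_eq, Finset.Nat.sum_antidiagonal_eq_sum_range_succ_mk]
  apply Finset.sum_congr rfl
  intro ℓ hℓ
  simp only [Finset.mem_range] at hℓ
  have h1 : k - ℓ = (k + 1) - (ℓ + 1) := by omega
  rw [h1, Nat.choose_symm (by omega), mul_comm]

lemma key (k : ℕ) (x : ℚ) :
    ∑ ℓ ∈ Finset.range (k + 1), (1 / ((ℓ : ℚ) + 1)) * genChoose (k : ℚ) ℓ * genChoose x ℓ
      = (1 / ((k : ℚ) + 1)) * genChoose (x + (k + 1)) k := by
  set p : Polynomial ℚ := ∑ ℓ ∈ Finset.range (k + 1),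
    Polynomial.C ((1 / ((ℓ : ℚ) + 1)) * genChoose (k : ℚ) ℓ * ((Nat.factorial ℓ : ℚ))⁻¹) *
      descPochhammer ℚ ℓ with hp
  set q : Polynomial ℚ := Polynomial.C ((1 / ((k : ℚ) + 1)) * ((Nat.factorial k : ℚ))⁻¹) *
    (descPochhammer ℚ k).comp (Polynomial.X + Polynomial.C ((k : ℚ) + 1)) with hq
  have evp : ∀ y : ℚ, p.eval y
      = ∑ ℓ ∈ Finset.range (k + 1), (1 / ((ℓ : ℚ) + 1)) * genChoose (k : ℚ) ℓ * genChoose y ℓ := by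
    intro y
    rw [hp, Polynomial.eval_finset_sum]
    apply Finset.sum_congr rfl
    intro ℓ _
    rw [Polynomial.eval_mul, Polynomial.eval_C, genChoose_eq y ℓ]
    ring
  have evq : ∀ y : ℚ, q.eval y = (1 / ((k : ℚ) + 1)) * genChoose (y + (k + 1)) k := by
    intro y
    rw [hq, Polynomial.eval_mul, Polynomial.eval_C, Polynomial.eval_comp, Polynomial.eval_add,
      Polynomial.eval_X, Polynomial.eval_C, genChoose_eq]
    ring
  have hpq : p = q := by
    apply Polynomial.eq_of_infinite_eval_eq
    apply Set.infinite_of_injective_forall_mem (f := fun n : ℕ => (n : ℚ))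
      (hi := Nat.cast_injective)
    intro n
    simp only [Set.mem_setOf_eq]
    rw [evp, evq]
    have hcast : ((n : ℚ) + (k + 1)) = ((n + (k + 1) : ℕ) : ℚ) := by push_cast; ring
    rw [hcast, genChoose_nat]
    simp_rw [genChoose_nat]
    have hmul : ((k : ℚ) + 1) ≠ 0 := by positivity
    have hsum : ∑ ℓ ∈ Finset.range (k + 1),
        ((k : ℚ) + 1) * (1 / ((ℓ : ℚ) + 1) * (k.choose ℓ : ℚ) * (n.choose ℓ : ℚ))
        = (((n + (k + 1)).choose k : ℕ) : ℚ) := by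
      rw [← nat_vand n k]
      push_cast
      apply Finset.sum_congr rfl
      intro ℓ _
      have h' : ((k : ℚ) + 1) * (k.choose ℓ : ℚ) = ((k + 1).choose (ℓ + 1) : ℚ) * ((ℓ : ℚ) + 1) := by
        exact_mod_cast Nat.add_one_mul_choose_eq k ℓ
      have hl : ((ℓ : ℚ) + 1) ≠ 0 := by positivity
      field_simp
      linear_combination (n.choose ℓ : ℚ) * h'
    apply mul_left_cancel₀ hmul
    rw [Finset.mul_sum, hsum]
    field_simp
  have := congrArg (Polynomial.eval x) hpq
  rw [evp, evq] at this
  exact this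

lemma genChoose_succ (y : ℚ) (k : ℕ) :
    genChoose y (k + 1) = y / ((k : ℚ) + 1) * genChoose (y - 1) k := by
  rw [genChoose, genChoose, Finset.prod_range_succ']
  have h1 : ∀ m ∈ Finset.range k, y - (((m + 1 : ℕ)) : ℚ) = (y - 1) - m := by
    intro m _; push_cast; ring
  rw [Finset.prod_congr rfl h1, Nat.factorial_succ]
  have hk : ((Nat.factorial k : ℚ)) ≠ 0 := by exact_mod_cast Nat.factorial_ne_zero k
  have hk1 : ((k : ℚ) + 1) ≠ 0 := by positivity
  field_simp
  push_cast
  ring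

/-- For all positive integers `b, c, i, g`:
`g/((b-1)(c-1)i + g) * C((b-1)(c-1)i + g, i)
  = Σ_{ℓ=0}^{i-1} (g/(ℓ+1)) * C(i-1, ℓ) * C(i(bc - b - c) + g - 1, ℓ)`
(as an identity in `ℚ`, using generalized binomial coefficients). -/
theorem stmt_8 (b c i g : ℕ) (hb : 0 < b) (hc : 0 < c) (hi : 0 < i) (hg : 0 < g) :
    (g : ℚ) / (((b : ℚ) - 1) * ((c : ℚ) - 1) * (i : ℚ) + (g : ℚ)) *
        genChoose (((b : ℚ) - 1) * ((c : ℚ) - 1) * (i : ℚ) + (g : ℚ)) i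
      = ∑ ℓ ∈ Finset.range i, (g : ℚ) / ((ℓ : ℚ) + 1) * genChoose ((i : ℚ) - 1) ℓ *
          genChoose ((i : ℚ) * ((b : ℚ) * (c : ℚ) - (b : ℚ) - (c : ℚ)) + (g : ℚ) - 1) ℓ := by
  obtain ⟨k, rfl⟩ : ∃ k, i = k + 1 := ⟨i - 1, by omega⟩
  set A : ℚ := ((b : ℚ) - 1) * ((c : ℚ) - 1) * ((k + 1 : ℕ) : ℚ) + (g : ℚ) with hA
  set x : ℚ := ((k + 1 : ℕ) : ℚ) * ((b : ℚ) * (c : ℚ) - (b : ℚ) - (c : ℚ)) + (g : ℚ) - 1 with hx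
  have hb1 : (1 : ℚ) ≤ b := by exact_mod_cast hb
  have hc1 : (1 : ℚ) ≤ c := by exact_mod_cast hc
  have hg1 : (0 : ℚ) < g := by exact_mod_cast hg
  have hA0 : A ≠ 0 := by
    have h1 : (0 : ℚ) ≤ ((b : ℚ) - 1) * ((c : ℚ) - 1) * ((k + 1 : ℕ) : ℚ) := by
      apply mul_nonneg (mul_nonneg (by linarith) (by linarith)) (by positivity)
    rw [hA]; nlinarith
  have hk1 : ((k : ℚ) + 1) ≠ 0 := by positivity
  have hterm : ∀ ℓ ∈ Finset.range (k + 1),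
      (g : ℚ) / ((ℓ : ℚ) + 1) * genChoose (((k + 1 : ℕ) : ℚ) - 1) ℓ * genChoose x ℓ
        = (g : ℚ) * ((1 / ((ℓ : ℚ) + 1)) * genChoose ((k : ℚ)) ℓ * genChoose x ℓ) := by
    intro ℓ _
    have : (((k + 1 : ℕ)) : ℚ) - 1 = (k : ℚ) := by push_cast; ring
    rw [this]; ring
  rw [Finset.sum_congr rfl hterm, ← Finset.mul_sum, key k x]
  have hxA : x + ((k : ℚ) + 1) = A - 1 := by rw [hx, hA]; push_cast; ring
  rw [hxA, genChoose_succ A k]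
  have : (((k + 1 : ℕ)) : ℚ) = (k : ℚ) + 1 := by push_cast; ring
  field_simp
end

section
/- Let F = 1 + Σ_{k≥1} ρ_k x^k ∈ ℚ[b, c][[x]] with each ρ_k divisible by b·c in ℚ[b,c], and let g be a further indeterminate. Define τ_k ∈ ℚ[b, c, g] by τ_k = Σ_{ℓ=1}^{k} C(g/(bc), ℓ) Σ_{k1+⋯+kℓ=k} ρ_{k1}⋯ρ_{kℓ}, interpreting C(g/(bc), ℓ) Σ ρ_{k1}⋯ρ_{kℓ} = (g(g-bc)(g-2bc)⋯(g-(ℓ-1)bc)/ℓ!) · Σ (ρ_{k1}/(bc))⋯(ρ_{kℓ}/(bc)). Then each τ_k is a polynomial in b, c, g, it is divisible by g, and its degree in g is exactly k provided ρ_1 ≠ 0. -/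
/-!
As a polynomial in `g = X 2`, the `ℓ`-th summand is `g (g - bc) ⋯ (g - (ℓ-1)bc) / ℓ!` times a
coefficient free of `g`. Every summand therefore has the factor `g` and `g`-degree at most `ℓ`, and
only the summand `ℓ = k` reaches degree `k`: since the only composition of `k` into `k` positive
parts is `1 + ⋯ + 1`, its coefficient is `(ρ₁/bc)^k / k! ≠ 0`.
-/

open MvPolynomial

theorem dvd_prod_range_sub_mul {A : Type*} [CommRing A] (x y : A) {ℓ : ℕ} (hℓ : 0 < ℓ) :
    x ∣ ∏ m ∈ Finset.range ℓ, (x - m * y) := by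
  simpa using Finset.dvd_prod_of_mem (fun m : ℕ => x - m * y) (Finset.mem_range.2 hℓ)

theorem Finset.Nat.antidiagonalTuple_self_filter_pos (k : ℕ) :
    (Finset.Nat.antidiagonalTuple k k).filter (fun f => ∀ i, 0 < f i) = {fun _ => 1} := by
  ext f
  simp only [Finset.mem_filter, Finset.Nat.mem_antidiagonalTuple, Finset.mem_singleton]
  constructor
  · rintro ⟨hsum, hpos⟩
    have hs : ∑ _ : Fin k, 1 = ∑ j, f j := by simp [hsum]
    funext i
    exact ((Finset.sum_eq_sum_iff_of_le fun j _ => hpos j).1 hs i (Finset.mem_univ i)).symm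
  · rintro rfl
    exact ⟨by simp, fun _ => one_pos⟩

namespace MvPolynomial

variable {R σ τ ι : Type*} [CommRing R]

theorem degreeOf_rename_eq_zero {f : σ → τ} {i : τ} (hi : i ∉ Set.range f)
    (p : MvPolynomial σ R) : degreeOf i (rename f p) = 0 := by
  classical
  by_contra h
  obtain ⟨j, -, rfl⟩ := Finset.mem_image.1 (vars_rename f p (mem_vars_iff_degreeOf_ne_zero.2 h))
  exact hi ⟨j, rfl⟩

theorem degreeOf_X_sub [Nontrivial R] {i : σ} {q : MvPolynomial σ R} (hq : degreeOf i q = 0) :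
    degreeOf i (X i - q) = 1 := by
  classical
  rw [sub_eq_add_neg, degreeOf_add_eq_of_degreeOf_lt] <;> simp [degreeOf_neg, hq]

theorem degreeOf_smul_mul_le (i : σ) (c : R) (p : MvPolynomial σ R) {q : MvPolynomial σ R}
    (hq : degreeOf i q = 0) : degreeOf i (c • p * q) ≤ degreeOf i p := by
  rw [smul_eq_C_mul]
  calc degreeOf i (C c * p * q) ≤ degreeOf i (C c * p) + degreeOf i q := degreeOf_mul_le i _ _
    _ ≤ degreeOf i p := by rw [hq, add_zero]; exact degreeOf_C_mul_le p i c

theorem degreeOf_sum_eq_of_lt {i : σ} {s : Finset ι} {f : ι → MvPolynomial σ R} {a : ι}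
    (ha : a ∈ s) (h : ∀ b ∈ s, b ≠ a → degreeOf i (f b) < degreeOf i (f a)) :
    degreeOf i (∑ b ∈ s, f b) = degreeOf i (f a) := by
  classical
  rw [← Finset.add_sum_erase s f ha]
  rcases (s.erase a).eq_empty_or_nonempty with he | ⟨b, hb⟩
  · simp [he]
  · have h' : ∀ b ∈ s.erase a, degreeOf i (f b) < degreeOf i (f a) := fun b hb =>
      h b (Finset.mem_of_mem_erase hb) (Finset.ne_of_mem_erase hb)
    apply degreeOf_add_eq_of_degreeOf_lt
    exact (degreeOf_sum_le i _ f).trans_lt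
      ((Finset.sup_lt_iff ((Nat.zero_le _).trans_lt (h' b hb))).2 h')

section IsDomain

variable [IsDomain R]

theorem degreeOf_prod_X_sub (i : σ) (s : Finset ι) {q : ι → MvPolynomial σ R}
    (hq : ∀ m ∈ s, degreeOf i (q m) = 0) : degreeOf i (∏ m ∈ s, (X i - q m)) = s.card := by
  have hdeg : ∀ m ∈ s, degreeOf i (X i - q m) = 1 := fun m hm => degreeOf_X_sub (hq m hm)
  rw [degreeOf_prod_eq, Finset.sum_congr rfl hdeg, Finset.card_eq_sum_ones]
  intro m hm h
  simpa [h] using hdeg m hm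

theorem degreeOf_smul_mul {c : R} (hc : c ≠ 0) (i : σ) (p : MvPolynomial σ R)
    {q : MvPolynomial σ R} (hq₀ : q ≠ 0) (hq : degreeOf i q = 0) :
    degreeOf i (c • p * q) = degreeOf i p := by
  rcases eq_or_ne p 0 with rfl | hp
  · simp
  rw [smul_eq_C_mul, mul_assoc, degreeOf_C_mul _ _ (mem_nonZeroDivisors_of_ne_zero hc),
    degreeOf_mul_eq hp hq₀, hq, add_zero]

theorem degreeOf_sum_smul_prod_X_sub_mul (i : σ) {k : ℕ} (hk : 1 ≤ k) {c : ℕ → R}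
    (hc : c k ≠ 0) {q r : ℕ → MvPolynomial σ R} (hq : ∀ m, degreeOf i (q m) = 0)
    (hr : ∀ ℓ, degreeOf i (r ℓ) = 0) (hrk : r k ≠ 0) :
    degreeOf i (∑ ℓ ∈ Finset.Icc 1 k, (c ℓ • ∏ m ∈ Finset.range ℓ, (X i - q m)) * r ℓ) = k := by
  have hprod : ∀ ℓ, degreeOf i (∏ m ∈ Finset.range ℓ, (X i - q m)) = ℓ := fun ℓ => by
    simpa using degreeOf_prod_X_sub i (Finset.range ℓ) fun m _ => hq m
  have htop : degreeOf i ((c k • ∏ m ∈ Finset.range k, (X i - q m)) * r k) = k := by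
    rw [degreeOf_smul_mul hc i _ hrk (hr k), hprod]
  rw [degreeOf_sum_eq_of_lt (Finset.right_mem_Icc.2 hk), htop]
  intro ℓ hℓ hne
  rw [htop]
  calc _ ≤ ℓ := (degreeOf_smul_mul_le i _ _ (hr ℓ)).trans (hprod ℓ).le
    _ < k := lt_of_le_of_ne (Finset.mem_Icc.1 hℓ).2 hne

end IsDomain

end MvPolynomial

/-- In `ℚ[b, c, g]` (variables `X 0 = b`, `X 1 = c`, `X 2 = g`): given tropical coefficients
`ρ_k = bc·σ_k` with `σ_k ∈ ℚ[b, c]`, define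
`τ_k = Σ_{ℓ=1}^{k} (g(g-bc)⋯(g-(ℓ-1)bc)/ℓ!) Σ_{k1+⋯+kℓ=k, k_i≥1} (ρ_{k1}/(bc))⋯(ρ_{kℓ}/(bc))`.
Then `τ_k` is a polynomial in `b, c, g` (by construction), divisible by `g`, and its degree
in `g` is exactly `k` provided `ρ_1 ≠ 0` (i.e. `σ_1 ≠ 0`). -/
theorem stmt_17 (σ : ℕ → MvPolynomial (Fin 2) ℚ) (k : ℕ) (hk : 1 ≤ k) :
    (X 2 : MvPolynomial (Fin 3) ℚ) ∣
        (∑ ℓ ∈ Finset.Icc 1 k,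
          ((Nat.factorial ℓ : ℚ)⁻¹ •
              ∏ m ∈ Finset.range ℓ,
                ((X 2 : MvPolynomial (Fin 3) ℚ) - (m : MvPolynomial (Fin 3) ℚ) * (X 0 * X 1))) *
            ∑ f ∈ (Finset.Nat.antidiagonalTuple ℓ k).filter (fun f => ∀ i, 0 < f i),
              ∏ i, MvPolynomial.rename Fin.castSucc (σ (f i))) ∧
    (σ 1 ≠ 0 →
      MvPolynomial.degreeOf 2
          (∑ ℓ ∈ Finset.Icc 1 k,
            ((Nat.factorial ℓ : ℚ)⁻¹ •
                ∏ m ∈ Finset.range ℓ,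
                  ((X 2 : MvPolynomial (Fin 3) ℚ) - (m : MvPolynomial (Fin 3) ℚ) *
                    (X 0 * X 1))) *
              ∑ f ∈ (Finset.Nat.antidiagonalTuple ℓ k).filter (fun f => ∀ i, 0 < f i),
                ∏ i, MvPolynomial.rename Fin.castSucc (σ (f i))) = k) := by
  refine ⟨Finset.dvd_sum fun ℓ hℓ => ?_, fun hσ => ?_⟩
  · rw [smul_eq_C_mul]
    exact ((dvd_prod_range_sub_mul _ _ (Finset.mem_Icc.1 hℓ).1).mul_left _).mul_right _
  have hg : (2 : Fin 3) ∉ Set.range Fin.castSucc := fun ⟨j, hj⟩ => Fin.castSucc_ne_last j hj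
  simp_rw [← map_prod, ← map_sum]
  refine degreeOf_sum_smul_prod_X_sub_mul 2 hk (by simp [Nat.factorial_ne_zero]) (fun m => ?_)
    (fun ℓ => degreeOf_rename_eq_zero hg _) ?_
  · have h := degreeOf_rename_eq_zero hg ((m : MvPolynomial (Fin 2) ℚ) * (X 0 * X 1))
    rwa [map_mul, map_natCast, map_mul, rename_X, rename_X] at h
  · rw [Finset.Nat.antidiagonalTuple_self_filter_pos, Finset.sum_singleton, Finset.prod_const,
      Finset.card_univ, Fintype.card_fin, map_pow]
    exact pow_ne_zero _ fun h =>
      hσ (rename_injective _ (Fin.castSucc_injective 2) (by simpa using h))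
end
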